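/- The process X(z₀, n) = W(z₀,n) − Z(z₀,n) is a martingale with respect to the natural filtration of the forgetting process, where z₀ = 1 − 1/e. -/

import Mathlib

open MeasureTheory ProbabilityTheory Finset

noncomputable section

/-- One step of the forgetting process: the new point `x` joins `S`; if `x` is strictly
larger than the current minimum of `S`, that minimum is removed. -/
def forgetStep (S : Finset ℝ) (x : ℝ) : Finset ℝ :=
  if h : S.Nonempty then
    if S.min' h < x then insert x (S.erase (S.min' h)) else insert x S
  else insert x S

/-- The memory after `n` steps, starting from the set `T`, with inputs `xs 0, xs 1, …`. -/
def forgetMem (T : Finset ℝ) (xs : ℕ → ℝ) : ℕ → Finset ℝ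
  | 0 => T
  | n + 1 => forgetStep (forgetMem T xs n) (xs n)

/-- `sCount xs x ℓ` : number of elements of the memory lying in `[0, x]` after `ℓ` steps,
starting from `S = {0}`. -/
def sCount (xs : ℕ → ℝ) (x : ℝ) (ℓ : ℕ) : ℕ :=
  ((forgetMem {0} xs ℓ).filter (· ≤ x)).card

/-- The branching weight `W(z,n) = Σ_{x ∈ S(z,n)} 1/(1-x)`, the sum over memory elements
strictly below `z` at time `n`. -/
def Wproc (xs : ℕ → ℝ) (z : ℝ) (n : ℕ) : ℝ :=
  ∑ x ∈ (forgetMem {0} xs n).filter (· < z), 1 / (1 - x)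

/-- `Z(z,n) = Σ_{k=1}^n W(z,k)·1{W(z,k-1)=0}`. -/
def Zproc (xs : ℕ → ℝ) (z : ℝ) (n : ℕ) : ℝ :=
  ∑ k ∈ Finset.range n, if Wproc xs z k = 0 then Wproc xs z (k + 1) else 0

/-- `X(z,n) = W(z,n) - Z(z,n)`. -/
def Xproc (xs : ℕ → ℝ) (z : ℝ) (n : ℕ) : ℝ :=
  Wproc xs z n - Zproc xs z n

/-- the minimum of the memory at time `n` (with junk value `0` if the memory were empty). -/
def mminProc (xs : ℕ → ℝ) (n : ℕ) : ℝ :=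
  (forgetMem {0} xs n).min.untopD 0

/-- the critical point `z₀ = 1 - 1/e`. -/
def critPoint : ℝ := 1 - (Real.exp 1)⁻¹

/-- The σ-algebra generated by the first `n` inputs `X 0, …, X (n-1)`. -/
def natSigma {Ω : Type*} [MeasurableSpace Ω] (X : ℕ → Ω → ℝ) (n : ℕ) : MeasurableSpace Ω :=
  ⨆ i ∈ Finset.range n, MeasurableSpace.comap (X i) inferInstance

/-- The natural filtration `F_n = σ(x_1, …, x_n)` of the input sequence. -/
def natFilt {Ω : Type*} [m0 : MeasurableSpace Ω] (X : ℕ → Ω → ℝ)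
    (hX : ∀ i, Measurable (X i)) : Filtration ℕ m0 where
  seq n := natSigma X n
  mono' n m hnm := biSup_mono fun i hi => Finset.mem_range.2 ((Finset.mem_range.1 hi).trans_le hnm)
  le' n := iSup₂_le fun i _ => measurable_iff_comap_le.1 (hX i)

/-- The input sequence is i.i.d. uniform on `[0,1]`. -/
def IsUnifIID {Ω : Type*} [MeasurableSpace Ω] (μ : Measure Ω) (X : ℕ → Ω → ℝ) : Prop :=
  (∀ i, Measurable (X i)) ∧
    iIndepFun X μ ∧
    ∀ i, Measure.map (X i) μ = volume.restrict (Set.Icc (0 : ℝ) 1)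

end

/-!
Fix `0 ≤ z < 1`. On `{W(z,n) ≠ 0}` the minimum `m` of the memory lies below `z`, and a fresh
input `y ∉ S(n)` changes `W` by `1{y < z}/(1 - y) - 1{m < y}/(1 - m)`: it enters the memory and
evicts `m` when `m < y`. For `y` uniform on `[0,1]` this has mean `-log(1 - z) - 1`, which
vanishes at `z₀ = 1 - 1/e`; on `{W(z,n) = 0}` the jump of `W` is absorbed by `Z`, so `X` does not
move. As `x_{n+1}` is independent of `F_n`, the conditional mean of the increment is obtained by
integrating over the fresh input with the past inputs frozen.
-/

lemma mem_of_mem_forgetStep {S : Finset ℝ} {x y : ℝ} (hy : y ∈ forgetStep S x) :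
    y = x ∨ y ∈ S := by
  unfold forgetStep at hy
  split_ifs at hy <;> simp only [mem_insert, mem_erase] at hy <;> tauto

lemma forgetStep_nonempty (S : Finset ℝ) (x : ℝ) : (forgetStep S x).Nonempty := by
  unfold forgetStep
  split_ifs <;> exact insert_nonempty _ _

lemma forgetMem_nonempty {T : Finset ℝ} (hT : T.Nonempty) (xs : ℕ → ℝ) :
    ∀ n, (forgetMem T xs n).Nonempty
  | 0 => hT
  | _ + 1 => forgetStep_nonempty _ _

lemma forall_mem_forgetMem {T : Finset ℝ} {xs : ℕ → ℝ} {p : ℝ → Prop} {n : ℕ}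
    (hT : ∀ y ∈ T, p y) (hxs : ∀ i < n, p (xs i)) : ∀ y ∈ forgetMem T xs n, p y := by
  induction n with
  | zero => exact hT
  | succ n ih =>
    intro y hy
    rcases mem_of_mem_forgetStep hy with rfl | hy
    · exact hxs n n.lt_succ_self
    · exact ih (fun i hi => hxs i (hi.trans n.lt_succ_self)) y hy

lemma card_forgetMem_le (T : Finset ℝ) (xs : ℕ → ℝ) (n : ℕ) :
    #(forgetMem T xs n) ≤ #T + n := by
  induction n with
  | zero => rfl
  | succ n ih =>
    calc #(forgetMem T xs (n + 1)) ≤ #(insert (xs n) (forgetMem T xs n)) :=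
          card_le_card fun y hy => mem_insert.2 (mem_of_mem_forgetStep hy)
      _ ≤ #T + (n + 1) := (card_insert_le _ _).trans (by omega)

lemma forgetMem_congr {T : Finset ℝ} {xs ys : ℕ → ℝ} {n : ℕ}
    (h : ∀ i < n, xs i = ys i) : forgetMem T xs n = forgetMem T ys n := by
  induction n with
  | zero => rfl
  | succ n ih =>
    simp only [forgetMem, ih fun i hi => h i (hi.trans n.lt_succ_self), h n n.lt_succ_self]

lemma sum_forgetStep {S : Finset ℝ} (hS : S.Nonempty) {x : ℝ} (hx : x ∉ S) (g : ℝ → ℝ) :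
    ∑ y ∈ forgetStep S x, g y =
      ∑ y ∈ S, g y + g x - if S.min' hS < x then g (S.min' hS) else 0 := by
  unfold forgetStep
  rw [dif_pos hS]
  split_ifs
  · rw [sum_insert fun h => hx (mem_of_mem_erase h), sum_erase_eq_sub (S.min'_mem hS)]
    ring
  · rw [sum_insert hx, sub_zero, add_comm]

lemma forgetStep_eq_insert_filter {S : Finset ℝ} (hS : S.Nonempty) (x : ℝ) :
    forgetStep S x = insert x (S.filter fun y => x ≤ S.min' hS ∨ S.min' hS < y) := by
  unfold forgetStep
  rw [dif_pos hS]
  split_ifs with hlt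
  · congr 1
    ext y
    simp only [mem_erase, mem_filter, not_le.2 hlt, false_or]
    exact ⟨fun ⟨hne, hy⟩ => ⟨hy, lt_of_le_of_ne (S.min'_le y hy) (Ne.symm hne)⟩,
      fun ⟨hy, hlt'⟩ => ⟨hlt'.ne', hy⟩⟩
  · rw [filter_true_of_mem fun y _ => Or.inl (not_lt.1 hlt)]

section

variable {α : Type*} [MeasurableSpace α]

/-- `Finset ℝ` carries no σ-algebra, so measurability of a random finite set is expressed through
its sums. -/
def SumMeasurable (F : α → Finset ℝ) : Prop :=
  ∀ f : α × ℝ → ℝ, Measurable f → Measurable fun a => ∑ x ∈ F a, f (a, x)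

namespace SumMeasurable

variable {F : α → Finset ℝ}

lemma const (T : Finset ℝ) : SumMeasurable fun _ : α => T :=
  fun _ hf => Finset.measurable_sum T fun _ _ => hf.comp (measurable_id.prodMk measurable_const)

lemma measurableSet_exists (hF : SumMeasurable F) {P : Set (α × ℝ)} (hP : MeasurableSet P) :
    MeasurableSet {a | ∃ x ∈ F a, (a, x) ∈ P} := by
  have hsum := hF _ ((measurable_const (a := (1 : ℝ))).indicator hP)
  convert (measurableSet_eq_fun hsum (measurable_const (a := (0 : ℝ)))).compl using 1
  ext a
  simp [Finset.sum_eq_zero_iff_of_nonneg fun x _ => Set.indicator_nonneg (fun _ _ => zero_le_one) _]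

lemma measurable_min' (hF : SumMeasurable F) (hne : ∀ a, (F a).Nonempty) :
    Measurable fun a => (F a).min' (hne a) := by
  refine measurable_of_Iio fun t => ?_
  convert hF.measurableSet_exists (measurableSet_lt measurable_snd (measurable_const (a := t)))
  ext a
  exact ⟨fun h => ⟨_, (F a).min'_mem (hne a), h⟩,
    fun ⟨y, hy, hyt⟩ => ((F a).min'_le y hy).trans_lt hyt⟩

lemma insert (hF : SumMeasurable F) {g : α → ℝ} (hg : Measurable g) :
    SumMeasurable fun a => insert (g a) (F a) := by
  intro f hf
  have hmem : MeasurableSet {a | g a ∈ F a} := by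
    convert hF.measurableSet_exists (measurableSet_eq_fun measurable_snd (hg.comp measurable_fst))
    simp
  have hsum : (fun a => ∑ x ∈ Insert.insert (g a) (F a), f (a, x)) =
      fun a => ∑ x ∈ F a, f (a, x) + if g a ∈ F a then 0 else f (a, g a) := by
    ext a
    split_ifs with h
    · rw [Finset.insert_eq_of_mem h, add_zero]
    · rw [Finset.sum_insert h, add_comm]
  rw [hsum]
  exact (hF f hf).add (Measurable.ite hmem measurable_const (hf.comp (measurable_id.prodMk hg)))

lemma filter (hF : SumMeasurable F) {P : Set (α × ℝ)} (hP : MeasurableSet P)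
    [DecidablePred (· ∈ P)] : SumMeasurable fun a => (F a).filter fun x => (a, x) ∈ P := by
  intro f hf
  simp only [Finset.sum_filter]
  exact hF _ (Measurable.ite hP hf measurable_const)

end SumMeasurable

end

lemma sumMeasurable_forgetMem {T : Finset ℝ} (hT : T.Nonempty) (n : ℕ) :
    SumMeasurable fun xs : ℕ → ℝ => forgetMem T xs n := by
  induction n with
  | zero => exact SumMeasurable.const T
  | succ n ih =>
    have hne := forgetMem_nonempty hT
    set m : (ℕ → ℝ) → ℝ := fun xs => (forgetMem T xs n).min' (hne xs n)
    have hm : Measurable m := ih.measurable_min' (hne · n)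
    have hP : MeasurableSet {p : (ℕ → ℝ) × ℝ | p.1 n ≤ m p.1 ∨ m p.1 < p.2} :=
      (measurableSet_le ((measurable_pi_apply n).comp measurable_fst)
        (hm.comp measurable_fst)).union
        (measurableSet_lt (hm.comp measurable_fst) measurable_snd)
    convert (ih.filter hP).insert (measurable_pi_apply n) using 2 with xs
    exact forgetStep_eq_insert_filter (hne xs n) (xs n)

lemma measurable_Wproc (z : ℝ) (n : ℕ) : Measurable fun xs : ℕ → ℝ => Wproc xs z n := by
  simp only [Wproc, Finset.sum_filter]
  exact sumMeasurable_forgetMem (Finset.singleton_nonempty 0) n _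
    (Measurable.ite (measurableSet_lt measurable_snd measurable_const)
      (measurable_const.div (measurable_const.sub measurable_snd)) measurable_const)

lemma measurable_Xproc (z : ℝ) (n : ℕ) : Measurable fun xs : ℕ → ℝ => Xproc xs z n := by
  refine (measurable_Wproc z n).sub (Finset.measurable_sum _ fun k _ => ?_)
  exact Measurable.ite (measurableSet_eq_fun (measurable_Wproc z k) measurable_const)
    (measurable_Wproc z (k + 1)) measurable_const

section Processes

variable {xs ys : ℕ → ℝ} {z : ℝ} {n : ℕ}

lemma Wproc_congr (h : ∀ i < n, xs i = ys i) : Wproc xs z n = Wproc ys z n := by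
  rw [Wproc, Wproc, forgetMem_congr h]

lemma Xproc_congr (h : ∀ i < n, xs i = ys i) : Xproc xs z n = Xproc ys z n := by
  have hW : ∀ k ≤ n, Wproc xs z k = Wproc ys z k := fun k hk =>
    Wproc_congr fun i hi => h i (hi.trans_le hk)
  rw [Xproc, Xproc, Zproc, Zproc, hW n le_rfl]
  congr 1
  refine Finset.sum_congr rfl fun k hk => ?_
  have hk := Finset.mem_range.1 hk
  rw [hW k hk.le, hW (k + 1) hk]

lemma Xproc_succ (xs : ℕ → ℝ) (z : ℝ) (n : ℕ) :
    Xproc xs z (n + 1) =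
      Xproc xs z n + if Wproc xs z n = 0 then 0 else Wproc xs z (n + 1) - Wproc xs z n := by
  by_cases h : Wproc xs z n = 0 <;> simp [Xproc, Zproc, Finset.sum_range_succ, h]

lemma abs_Wproc_le (hz : z < 1) (xs : ℕ → ℝ) (n : ℕ) :
    |Wproc xs z n| ≤ (n + 1) / (1 - z) := by
  set S := (forgetMem {0} xs n).filter (· < z)
  have hterm : ∀ x ∈ S, 0 ≤ 1 / (1 - x) ∧ 1 / (1 - x) ≤ 1 / (1 - z) := fun x hx => by
    have := (Finset.mem_filter.1 hx).2
    exact ⟨one_div_nonneg.2 (by linarith), one_div_le_one_div_of_le (by linarith) (by linarith)⟩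
  have hcard : (#S : ℝ) ≤ n + 1 := by
    have := (Finset.card_filter_le (forgetMem {0} xs n) (· < z)).trans (card_forgetMem_le {0} xs n)
    rw [Finset.card_singleton, add_comm] at this
    exact_mod_cast this
  rw [abs_of_nonneg (show 0 ≤ Wproc xs z n from Finset.sum_nonneg fun x hx => (hterm x hx).1)]
  calc Wproc xs z n ≤ ∑ _x ∈ S, 1 / (1 - z) := Finset.sum_le_sum fun x hx => (hterm x hx).2
    _ = #S * (1 / (1 - z)) := by rw [Finset.sum_const, nsmul_eq_mul]
    _ ≤ (n + 1) * (1 / (1 - z)) := by gcongr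
    _ = (n + 1) / (1 - z) := by ring

lemma exists_abs_Xproc_le (hz : z < 1) (n : ℕ) : ∃ C, ∀ xs, |Xproc xs z n| ≤ C := by
  induction n with
  | zero =>
    exact ⟨(0 + 1) / (1 - z), fun xs => by simpa [Xproc, Zproc] using abs_Wproc_le hz xs 0⟩
  | succ n ih =>
    obtain ⟨C, hC⟩ := ih
    refine ⟨C + ((n + 1 + 1) / (1 - z) + (n + 1) / (1 - z)), fun xs => ?_⟩
    rw [Xproc_succ]
    refine (abs_add_le _ _).trans (add_le_add (hC xs) ?_)
    have hbound := add_le_add (abs_Wproc_le hz xs (n + 1)) (abs_Wproc_le hz xs n)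
    push_cast at hbound
    split_ifs
    · exact abs_zero.trans_le ((add_nonneg (abs_nonneg _) (abs_nonneg _)).trans hbound)
    · exact (abs_sub _ _).trans hbound

lemma Wproc_succ_sub (hS : (forgetMem {0} xs n).Nonempty) (hx : xs n ∉ forgetMem {0} xs n)
    (hmin : (forgetMem {0} xs n).min' hS < z) :
    Wproc xs z (n + 1) - Wproc xs z n =
      (if xs n < z then 1 / (1 - xs n) else 0) -
        if (forgetMem {0} xs n).min' hS < xs n then
          1 / (1 - (forgetMem {0} xs n).min' hS) else 0 := by
  simp only [Wproc, Finset.sum_filter]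
  rw [forgetMem, sum_forgetStep hS hx, if_pos hmin]
  ring

lemma min'_forgetMem_lt_of_Wproc_ne_zero (hS : (forgetMem {0} xs n).Nonempty)
    (hW : Wproc xs z n ≠ 0) : (forgetMem {0} xs n).min' hS < z := by
  obtain ⟨x, hx⟩ : ((forgetMem {0} xs n).filter (· < z)).Nonempty :=
    Finset.nonempty_iff_ne_empty.2 fun h => hW (by rw [Wproc, h, Finset.sum_empty])
  rw [Finset.mem_filter] at hx
  exact ((forgetMem {0} xs n).min'_le x hx.1).trans_lt hx.2

end Processes

section Integrals

open Set

lemma integrableOn_Icc_ite_inv_one_sub {z : ℝ} (hz : z < 1) :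
    IntegrableOn (fun y : ℝ => if y < z then 1 / (1 - y) else 0) (Icc 0 1) := by
  have hcont : ContinuousOn (fun y : ℝ => 1 / (1 - y)) (Icc 0 z) :=
    continuousOn_const.div (continuousOn_const.sub continuousOn_id) fun y hy => by
      linarith [hy.2]
  have h : IntegrableOn (fun y : ℝ => 1 / (1 - y)) (Iio z) (volume.restrict (Icc 0 1)) := by
    rw [IntegrableOn, Measure.restrict_restrict measurableSet_Iio]
    exact hcont.integrableOn_Icc.mono_set fun y hy => ⟨hy.2.1, hy.1.le⟩
  refine ((integrable_indicator_iff measurableSet_Iio).2 h).congr (ae_of_all _ fun y => ?_)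
  simp [indicator_apply]

lemma integral_Icc_ite_inv_one_sub {z : ℝ} (hz0 : 0 ≤ z) (hz1 : z < 1) :
    ∫ y in Icc (0 : ℝ) 1, (if y < z then 1 / (1 - y) else 0) = -Real.log (1 - z) := by
  have hset : Iio z ∩ Icc (0 : ℝ) 1 = Ico 0 z := by
    ext y
    exact ⟨fun ⟨h1, h2, _⟩ => ⟨h2, h1⟩,
      fun ⟨h1, h2⟩ => ⟨h2, h1, by linarith [show y < z from h2]⟩⟩
  calc ∫ y in Icc (0 : ℝ) 1, (if y < z then 1 / (1 - y) else 0)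
      = ∫ y in Icc (0 : ℝ) 1, (Iio z).indicator (fun y => 1 / (1 - y)) y := by
        simp [indicator]
    _ = ∫ y in (0 : ℝ)..z, 1 / (1 - y) := by
        rw [integral_indicator measurableSet_Iio, Measure.restrict_restrict measurableSet_Iio, hset,
          integral_Ico_eq_integral_Ioo, ← integral_Ioc_eq_integral_Ioo,
          intervalIntegral.integral_of_le hz0]
    _ = -Real.log (1 - z) := by
        simp only [one_div]
        rw [intervalIntegral.integral_comp_sub_left (fun u => u⁻¹), sub_zero,
          integral_inv_of_pos (by linarith) one_pos, div_eq_inv_mul, mul_one, Real.log_inv]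

lemma integrableOn_Icc_ite_const (m c : ℝ) :
    IntegrableOn (fun y : ℝ => if m < y then c else 0) (Icc 0 1) :=
  ((integrable_const c).indicator (measurableSet_Ioi (a := m))).congr
    (ae_of_all _ fun y => by simp [indicator])

lemma integral_Icc_ite_const {m : ℝ} (hm0 : 0 ≤ m) (hm1 : m ≤ 1) (c : ℝ) :
    ∫ y in Icc (0 : ℝ) 1, (if m < y then c else 0) = (1 - m) * c := by
  have hset : Ioi m ∩ Icc (0 : ℝ) 1 = Ioc m 1 := by
    ext y
    exact ⟨fun ⟨h1, _, h2⟩ => ⟨h1, h2⟩,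
      fun ⟨h1, h2⟩ => ⟨h1, by linarith [show m < y from h1], h2⟩⟩
  calc ∫ y in Icc (0 : ℝ) 1, (if m < y then c else 0)
      = ∫ y in Icc (0 : ℝ) 1, (Ioi m).indicator (fun _ => c) y := by simp [indicator_apply]
    _ = (1 - m) * c := by
        rw [integral_indicator_const c measurableSet_Ioi,
          measureReal_restrict_apply measurableSet_Ioi, hset, Real.volume_real_Ioc_of_le hm1,
          smul_eq_mul]

end Integrals

lemma integral_Xproc_update_succ_sub {xs : ℕ → ℝ} {z : ℝ} {n : ℕ} (hz0 : 0 ≤ z)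
    (hz1 : z < 1) (hxs : ∀ i < n, 0 ≤ xs i) :
    ∫ y in Set.Icc (0 : ℝ) 1, (Xproc (Function.update xs n y) z (n + 1) - Xproc xs z n) =
      if Wproc xs z n = 0 then 0 else -Real.log (1 - z) - 1 := by
  have hupd : ∀ y, ∀ i < n, Function.update xs n y i = xs i := fun y i hi =>
    Function.update_of_ne hi.ne _ _
  have hinc : ∀ y, Xproc (Function.update xs n y) z (n + 1) - Xproc xs z n =
      if Wproc xs z n = 0 then 0 else Wproc (Function.update xs n y) z (n + 1) - Wproc xs z n := by
    intro y
    rw [Xproc_succ, Xproc_congr (hupd y), Wproc_congr (hupd y), add_sub_cancel_left]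
  simp_rw [hinc]
  split_ifs with hW
  · exact MeasureTheory.integral_zero _ _
  set S := forgetMem {0} xs n
  have hS : S.Nonempty := forgetMem_nonempty (Finset.singleton_nonempty 0) xs n
  set m := S.min' hS
  have hmz : m < z := min'_forgetMem_lt_of_Wproc_ne_zero hS hW
  have hm0 : 0 ≤ m := forall_mem_forgetMem (p := (0 ≤ ·)) (by simp) hxs m (S.min'_mem hS)
  have hae : ∀ᵐ y ∂volume.restrict (Set.Icc (0 : ℝ) 1),
      Wproc (Function.update xs n y) z (n + 1) - Wproc xs z n =
        (if y < z then 1 / (1 - y) else 0) - if m < y then 1 / (1 - m) else 0 := by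
    refine ae_restrict_of_ae ((S.countable_toSet.ae_notMem volume).mono fun y hy => ?_)
    have hSy : forgetMem {0} (Function.update xs n y) n = S := forgetMem_congr (hupd y)
    rw [← Wproc_congr (hupd y), Wproc_succ_sub (hSy ▸ hS) (by simpa [hSy] using hy)
      (by simpa [hSy] using hmz)]
    simp [hSy, m]
  rw [integral_congr_ae hae,
    integral_sub (integrableOn_Icc_ite_inv_one_sub hz1) (integrableOn_Icc_ite_const m _),
    integral_Icc_ite_inv_one_sub hz0 hz1, integral_Icc_ite_const hm0 (by linarith),
    mul_one_div_cancel (by linarith)]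

theorem ProbabilityTheory.IndepFun.integral_comp_prodMk {Ω β γ : Type*} [MeasurableSpace Ω]
    [MeasurableSpace β] [MeasurableSpace γ] {μ : Measure Ω} [IsFiniteMeasure μ] {V : Ω → β}
    {Y : Ω → γ} (hV : Measurable V) (hY : Measurable Y) (hVY : IndepFun V Y μ)
    {f : β × γ → ℝ} (hf : Measurable f) {C : ℝ} (hC : ∀ p, |f p| ≤ C) :
    ∫ ω, f (V ω, Y ω) ∂μ = ∫ ω, ∫ y, f (V ω, y) ∂(μ.map Y) ∂μ := by
  have hint : Integrable f ((μ.map V).prod (μ.map Y)) :=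
    .of_bound hf.aestronglyMeasurable C (ae_of_all _ fun p => (Real.norm_eq_abs _).trans_le (hC p))
  have hmap := hVY.map_prod_eq_prod_map_map hV.aemeasurable hY.aemeasurable
  rw [← integral_map hV.aemeasurable
      hf.stronglyMeasurable.integral_prod_right'.aestronglyMeasurable,
    ← integral_prod f hint, ← hmap, integral_map (hV.prodMk hY).aemeasurable (hmap ▸ hint.1)]

section Inputs

variable {Ω : Type*} (X : ℕ → Ω → ℝ)

def pastInputs (n : ℕ) (ω : Ω) : ℕ → ℝ := fun i => if i < n then X i ω else 0

variable {X}

lemma Xproc_eq_Xproc_pastInputs (ω : Ω) (z : ℝ) (n : ℕ) :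
    Xproc (fun i => X i ω) z n = Xproc (pastInputs X n ω) z n :=
  Xproc_congr fun i hi => by simp [pastInputs, hi]

lemma Xproc_succ_eq_Xproc_update_pastInputs (ω : Ω) (z : ℝ) (n : ℕ) :
    Xproc (fun i => X i ω) z (n + 1) =
      Xproc (Function.update (pastInputs X n ω) n (X n ω)) z (n + 1) := by
  refine Xproc_congr fun i hi => ?_
  rcases (Nat.lt_succ_iff_lt_or_eq.1 hi) with hi | rfl
  · simp [Function.update_of_ne hi.ne, pastInputs, hi]
  · simp

variable [MeasurableSpace Ω]

lemma measurable_natSigma {i n : ℕ} (hi : i < n) : Measurable[natSigma X n] (X i) :=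
  Measurable.of_comap_le (le_iSup₂ (f := fun i (_ : i ∈ Finset.range n) =>
    MeasurableSpace.comap (X i) inferInstance) i (Finset.mem_range.2 hi))

lemma measurable_pastInputs (n : ℕ) : Measurable[natSigma X n] (pastInputs X n) := by
  refine @measurable_pi_lambda Ω ℕ (fun _ => ℝ) (natSigma X n) _ _ fun i => ?_
  by_cases hi : i < n
  · simp only [pastInputs, if_pos hi]
    exact measurable_natSigma hi
  · simp only [pastInputs, if_neg hi]
    exact measurable_const

lemma natSigma_le_comap_pastInputs (n : ℕ) :
    natSigma X n ≤ MeasurableSpace.comap (pastInputs X n) inferInstance := by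
  refine iSup₂_le fun i hi => Measurable.comap_le ?_
  have hXi : X i = (fun v : ℕ → ℝ => v i) ∘ pastInputs X n := by
    ext ω; simp [pastInputs, Finset.mem_range.1 hi]
  rw [hXi]
  exact (measurable_pi_apply i).comp (comap_measurable _)

lemma indepFun_pastInputs {μ : Measure Ω} (hmeas : ∀ i, Measurable (X i))
    (hindep : iIndepFun X μ) (n : ℕ) : IndepFun (pastInputs X n) (X n) μ := by
  have h := indep_iSup_of_disjoint (fun i => (hmeas i).comap_le) hindep.iIndep
    (S := (Finset.range n : Set ℕ)) (T := {n}) (by simp)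
  simp only [Set.mem_singleton_iff, iSup_iSup_eq_left, Finset.mem_coe] at h
  rw [IndepFun_iff_Indep]
  exact indep_of_indep_of_le_left h (measurable_pastInputs n).comap_le

end Inputs

section Martingale

variable {Ω : Type*} [MeasurableSpace Ω] {μ : Measure Ω} {X : ℕ → Ω → ℝ}

lemma ae_nonneg_of_map_eq_uniform (hmeas : ∀ i, Measurable (X i))
    (hunif : ∀ i, Measure.map (X i) μ = volume.restrict (Set.Icc (0 : ℝ) 1)) :
    ∀ᵐ ω ∂μ, ∀ i, 0 ≤ X i ω := by
  refine ae_all_iff.2 fun i => (ae_map_iff (hmeas i).aemeasurable measurableSet_Ici).1 ?_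
  rw [hunif i]
  exact (ae_restrict_iff' measurableSet_Icc).2 (ae_of_all _ fun y hy => hy.1)

lemma stronglyAdapted_Xproc (hmeas : ∀ i, Measurable (X i)) (z : ℝ) :
    StronglyAdapted (natFilt X hmeas) fun n ω => Xproc (fun i => X i ω) z n := fun n => by
  simp_rw [Xproc_eq_Xproc_pastInputs]
  exact ((measurable_Xproc z n).comp (measurable_pastInputs n)).stronglyMeasurable

lemma integrable_Xproc [IsFiniteMeasure μ] (hmeas : ∀ i, Measurable (X i)) {z : ℝ} (hz : z < 1)
    (n : ℕ) : Integrable (fun ω => Xproc (fun i => X i ω) z n) μ := by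
  obtain ⟨C, hC⟩ := exists_abs_Xproc_le hz n
  exact .of_bound ((measurable_Xproc z n).comp (measurable_pi_lambda _ hmeas)).aestronglyMeasurable
    C (ae_of_all _ fun ω => (Real.norm_eq_abs _).trans_le (hC _))

lemma setIntegral_Xproc_succ_sub [IsFiniteMeasure μ] (hmeas : ∀ i, Measurable (X i))
    (hindep : iIndepFun X μ)
    (hunif : ∀ i, Measure.map (X i) μ = volume.restrict (Set.Icc (0 : ℝ) 1))
    {z : ℝ} (hz0 : 0 ≤ z) (hz1 : z < 1) {n : ℕ} {s : Set Ω}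
    (hs : MeasurableSet[natSigma X n] s) :
    ∫ ω in s, (Xproc (fun i => X i ω) z (n + 1) - Xproc (fun i => X i ω) z n) ∂μ =
    ∫ ω in s, (if Wproc (fun i => X i ω) z n = 0 then 0 else -Real.log (1 - z) - 1) ∂μ := by
  obtain ⟨B, hB, rfl⟩ := natSigma_le_comap_pastInputs n s hs
  set V := pastInputs X n
  have hV : Measurable V := (measurable_pastInputs n).mono ((natFilt X hmeas).le n) le_rfl
  set Ψ : (ℕ → ℝ) × ℝ → ℝ := fun p =>
    B.indicator 1 p.1 * (Xproc (Function.update p.1 n p.2) z (n + 1) - Xproc p.1 z n)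
  have hΨ : Measurable Ψ := ((measurable_const.indicator hB).comp measurable_fst).mul
    (((measurable_Xproc z (n + 1)).comp measurable_update').sub
      ((measurable_Xproc z n).comp measurable_fst))
  obtain ⟨C₁, hC₁⟩ := exists_abs_Xproc_le hz1 (n + 1)
  obtain ⟨C₀, hC₀⟩ := exists_abs_Xproc_le hz1 n
  have hΨC : ∀ p, |Ψ p| ≤ C₁ + C₀ := fun p => by
    have := (abs_sub _ _).trans (add_le_add (hC₁ (Function.update p.1 n p.2)) (hC₀ p.1))
    by_cases h : p.1 ∈ B <;> simp [Ψ, h, this, (abs_nonneg _).trans this]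
  have hindicator (g : Ω → ℝ) ω :
      (V ⁻¹' B).indicator g ω = B.indicator 1 (V ω) * g ω := by
    by_cases h : V ω ∈ B <;> simp [h]
  rw [← integral_indicator (hV hB), ← integral_indicator (hV hB)]
  simp_rw [hindicator, Xproc_eq_Xproc_pastInputs (n := n),
    Xproc_succ_eq_Xproc_update_pastInputs,
    Wproc_congr (n := n) (ys := V _) fun i hi => (if_pos hi).symm]
  change ∫ ω, Ψ (V ω, X n ω) ∂μ = _
  rw [(indepFun_pastInputs hmeas hindep n).integral_comp_prodMk hV (hmeas n) hΨ hΨC, hunif n]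
  refine integral_congr_ae ((ae_nonneg_of_map_eq_uniform hmeas hunif).mono fun ω hω => ?_)
  simp only [Ψ]
  rw [integral_const_mul,
    integral_Xproc_update_succ_sub hz0 hz1 fun i hi => by simp [V, pastInputs, hi, hω i]]

end Martingale

lemma log_one_sub_critPoint : Real.log (1 - critPoint) = -1 := by
  rw [critPoint, sub_sub_cancel, Real.log_inv, Real.log_exp]

lemma critPoint_nonneg : 0 ≤ critPoint := by
  rw [critPoint, sub_nonneg]
  exact inv_le_one_of_one_le₀ (Real.one_le_exp zero_le_one)

lemma critPoint_lt_one : critPoint < 1 := by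
  rw [critPoint, sub_lt_self_iff]
  exact inv_pos.2 (Real.exp_pos 1)

/-- The process `X(z₀,n) = W(z₀,n) − Z(z₀,n)`, with `z₀ = 1 − 1/e`, is a
martingale with respect to the natural filtration of the inputs of the forgetting process. -/
theorem Xproc_martingale {Ω : Type*} [MeasurableSpace Ω] (μ : Measure Ω)
    [IsProbabilityMeasure μ] (X : ℕ → Ω → ℝ)
    (hmeas : ∀ i, Measurable (X i))
    (hindep : iIndepFun X μ)
    (hunif : ∀ i, Measure.map (X i) μ = volume.restrict (Set.Icc (0 : ℝ) 1)) :
    Martingale (fun n ω => Xproc (fun i => X i ω) critPoint n) (natFilt X hmeas) μ := by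
  have hint := integrable_Xproc (μ := μ) hmeas critPoint_lt_one
  refine martingale_of_setIntegral_eq_succ (stronglyAdapted_Xproc hmeas critPoint) hint
    fun n s hs => ?_
  have hincr := setIntegral_Xproc_succ_sub hmeas hindep hunif critPoint_nonneg critPoint_lt_one hs
  simp only [log_one_sub_critPoint, neg_neg, sub_self, ite_self, integral_zero] at hincr
  rw [integral_sub (hint (n + 1)).integrableOn (hint n).integrableOn, sub_eq_zero] at hincr
  exact hincr.symm
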